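/- arXiv:2207.00875 — 2 statements merged into one kernel-verified Lean document; each statement's English description precedes it below -/
import Mathlib

section
/- Let r > 0, let A be a real 2×2 matrix such that rkI − A is invertible for all k ∈ ℕ with ‖(rkI − A)^{-1}‖ ≤ C/(rk+1), and let F ∈ Ω²(ν). Then u(v) := Σ_{n≥0} (rnI − A)^{-1} F_n v^n is the unique solution in Ω²(ν) of the linear ODE r v u'(v) − A u(v) = F(v), and satisfies ‖u‖ ≤ C‖F‖. -/
open scoped Topology

set_option linter.unusedSectionVars false

section Aux

variable {E : Type*} [NormedAddCommGroup E] [NormedSpace ℝ E]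

private lemma aux_summable [CompleteSpace E] {ν : ℝ} (c : ℕ → E)
    (hc : Summable fun n => ‖c n‖ * ν ^ n)
    {v : ℝ} (hv : |v| ≤ ν) : Summable fun n : ℕ => v ^ n • c n := by
  refine Summable.of_norm
    (Summable.of_nonneg_of_le (fun n => norm_nonneg _) (fun n => ?_) hc)
  rw [norm_smul, norm_pow, Real.norm_eq_abs, mul_comm]
  have h0 : (0:ℝ) ≤ |v| := abs_nonneg v
  gcongr

private lemma aux_summable_deriv {ν : ℝ} (hν : 0 < ν) (c : ℕ → E)
    (hc : Summable fun n => ‖c n‖ * ν ^ n) {ρ : ℝ} (hρ0 : 0 ≤ ρ) (hρν : ρ < ν) :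
    Summable fun n : ℕ => (n : ℝ) * ρ ^ (n - 1) * ‖c n‖ := by
  set M := ∑' n : ℕ, ‖c n‖ * ν ^ n with hMdef
  have hMn : ∀ n, ‖c n‖ * ν ^ n ≤ M := fun n => Summable.le_tsum hc n (fun m _ => by positivity)
  have hq : |ρ / ν| < 1 := by
    rw [abs_div, abs_of_nonneg hρ0, abs_of_pos hν, div_lt_one hν]; exact hρν
  have hq' : ‖ρ / ν‖ < 1 := by rwa [Real.norm_eq_abs]
  have hq2 : ρ / ν < 1 := (div_lt_one hν).2 hρν
  have hs : Summable fun n : ℕ => (n : ℝ) * (ρ / ν) ^ (n - 1) := by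
    rw [← summable_nat_add_iff 1]
    refine ((summable_pow_mul_geometric_of_norm_lt_one 1 hq').add
      (summable_geometric_of_lt_one (by positivity) hq2)).congr fun n => ?_
    simp only [Nat.add_sub_cancel, pow_one]
    push_cast
    ring
  refine Summable.of_nonneg_of_le (fun n => by positivity) (fun n => ?_) (hs.mul_left (M / ν))
  cases n with
  | zero => simp
  | succ m =>
    have hνm : (0:ℝ) < ν ^ (m + 1) := by positivity
    have h1 : ‖c (m + 1)‖ ≤ M / ν ^ (m + 1) := (le_div_iff₀ hνm).2 (hMn (m + 1))
    calc ((m + 1 : ℕ) : ℝ) * ρ ^ (m + 1 - 1) * ‖c (m + 1)‖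
        ≤ ((m + 1 : ℕ) : ℝ) * ρ ^ m * (M / ν ^ (m + 1)) := by
          simp only [Nat.add_sub_cancel]
          gcongr
      _ = M / ν * (((m + 1 : ℕ) : ℝ) * (ρ / ν) ^ (m + 1 - 1)) := by
          simp only [Nat.add_sub_cancel, div_pow]
          field_simp
          ring

private lemma summable_deriv_terms [CompleteSpace E] {ν : ℝ} (hν : 0 < ν) (c : ℕ → E)
    (hc : Summable fun n => ‖c n‖ * ν ^ n) {v : ℝ} (hv : |v| < ν) :
    Summable fun n : ℕ => ((n : ℝ) * v ^ (n - 1)) • c n := by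
  refine Summable.of_norm ((aux_summable_deriv hν c hc (abs_nonneg v) hv).congr fun n => ?_)
  rw [norm_smul, Real.norm_eq_abs, abs_mul, abs_pow, Nat.abs_cast]

private lemma aux_hasDerivAt {ν : ℝ} (hν : 0 < ν) (c : ℕ → E) [CompleteSpace E]
    (hc : Summable fun n => ‖c n‖ * ν ^ n) {v : ℝ} (hv : |v| < ν) :
    HasDerivAt (fun w : ℝ => ∑' n : ℕ, w ^ n • c n)
      (∑' n : ℕ, ((n : ℝ) * v ^ (n - 1)) • c n) v := by
  set ρ := (|v| + ν) / 2 with hρdef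
  have hρ0 : 0 ≤ ρ := by positivity
  have hvρ : |v| < ρ := by rw [hρdef]; linarith
  have hρν : ρ < ν := by rw [hρdef]; linarith
  have hρpos : 0 < ρ := lt_of_le_of_lt (abs_nonneg v) hvρ
  refine hasDerivAt_tsum_of_isPreconnected (y₀ := (0:ℝ))
    (aux_summable_deriv hν c hc hρ0 hρν) Metric.isOpen_ball
    (convex_ball (0:ℝ) ρ).isPreconnected
    (fun n y _ => (hasDerivAt_pow n y).smul_const (c n)) (fun n y hy => ?_)
    (mem_ball_zero_iff.2 (by simpa using hρpos))
    (aux_summable c hc (by simp [hν.le])) (mem_ball_zero_iff.2 (by rwa [Real.norm_eq_abs]))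
  rw [mem_ball_zero_iff, Real.norm_eq_abs] at hy
  rw [norm_smul, Real.norm_eq_abs, abs_mul, abs_pow, Nat.abs_cast]
  have h0 : (0:ℝ) ≤ |y| := abs_nonneg y
  have hyρ : |y| ≤ ρ := hy.le
  gcongr

private lemma key_hasSum {ν : ℝ} (hν : 0 < ν) (r : ℝ) (A : E →L[ℝ] E) (c : ℕ → E)
    [CompleteSpace E]
    (hc : Summable fun n => ‖c n‖ * ν ^ n) {v : ℝ} (hv : |v| < ν) :
    HasSum (fun n : ℕ => v ^ n • ((r * (n : ℝ)) • c n - A (c n)))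
      ((r * v) • (∑' n : ℕ, ((n : ℝ) * v ^ (n - 1)) • c n) - A (∑' n : ℕ, v ^ n • c n)) := by
  have S1 := summable_deriv_terms hν c hc hv
  have S2 := aux_summable c hc hv.le
  have h1 : HasSum (fun n : ℕ => (r * v) • (((n : ℝ) * v ^ (n - 1)) • c n))
      ((r * v) • ∑' n : ℕ, ((n : ℝ) * v ^ (n - 1)) • c n) := S1.hasSum.const_smul _
  have h2 := A.hasSum S2.hasSum
  have hfg : (fun n : ℕ => v ^ n • ((r * (n : ℝ)) • c n - A (c n)))
      = fun n : ℕ => (r * v) • (((n : ℝ) * v ^ (n - 1)) • c n) - A (v ^ n • c n) := by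
    funext n
    have hs : v ^ n * (r * (n : ℝ)) = (r * v) * ((n : ℝ) * v ^ (n - 1)) := by
      cases n with
      | zero => push_cast; ring
      | succ m => simp only [Nat.add_sub_cancel]; push_cast; ring
    rw [map_smul, smul_sub, smul_smul, smul_smul, hs]
  rw [hfg]
  exact h1.sub h2

private lemma aux_zero [CompleteSpace E] {ν : ℝ} (hν : 0 < ν) (c : ℕ → E)
    (hc : Summable fun n => ‖c n‖ * ν ^ n)
    (h0 : ∀ v : ℝ, |v| < ν → ∑' n : ℕ, v ^ n • c n = 0) (n : ℕ) : c n = 0 := by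
  set p : FormalMultilinearSeries ℝ ℝ E :=
    fun n => ContinuousMultilinearMap.mkPiRing ℝ (Fin n) (c n) with hpdef
  have hp : HasFPowerSeriesOnBall 0 p 0 (ENNReal.ofReal ν) := by
    refine ⟨?_, by simpa using hν, fun {y} hy => ?_⟩
    · have hsum : Summable fun n => ‖p n‖ * ((ν.toNNReal : ℝ)) ^ n := by
        simpa [hpdef, ContinuousMultilinearMap.norm_mkPiRing,
          Real.coe_toNNReal _ hν.le] using hc
      exact p.le_radius_of_summable (r := ν.toNNReal) hsum
    · rw [Metric.emetric_ball, mem_ball_zero_iff, Real.norm_eq_abs] at hy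
      have h := (aux_summable c hc hy.le).hasSum
      rw [h0 y hy] at h
      simpa [hpdef, ContinuousMultilinearMap.mkPiRing_apply] using h
  have hp0 : p = 0 := hp.hasFPowerSeriesAt.eq_zero
  have hn := congrFun hp0 n
  calc c n = p n (fun _ => 1) := by
        simp [hpdef, ContinuousMultilinearMap.mkPiRing_apply]
    _ = 0 := by rw [hn]; rfl

end Aux

/-- Let `r > 0`, `A` a linear map on `ℝ²` such that `rnI - A` is invertible for all `n ∈ ℕ`
with `‖(rnI - A)⁻¹‖ ≤ C/(rn+1)`, and `F ∈ Ω²(ν)`. Then `u(v) = Σ (rnI - A)⁻¹ F_n v^n`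
belongs to `Ω²(ν)` with `‖u‖ ≤ C ‖F‖`, solves `r v u'(v) - A u(v) = F(v)` on `|v| < ν`,
and is the unique solution of this equation in `Ω²(ν)`. -/
theorem stmt_5 (ν C r : ℝ) (hν : 0 < ν) (hC : 0 < C) (hr : 0 < r)
    (A : EuclideanSpace ℝ (Fin 2) →L[ℝ] EuclideanSpace ℝ (Fin 2))
    (B : ℕ → EuclideanSpace ℝ (Fin 2) →L[ℝ] EuclideanSpace ℝ (Fin 2))
    (hB : ∀ n : ℕ, ((r * n) • (ContinuousLinearMap.id ℝ (EuclideanSpace ℝ (Fin 2))) - A).comp (B n)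
        = ContinuousLinearMap.id ℝ (EuclideanSpace ℝ (Fin 2)) ∧
      (B n).comp ((r * n) • (ContinuousLinearMap.id ℝ (EuclideanSpace ℝ (Fin 2))) - A)
        = ContinuousLinearMap.id ℝ (EuclideanSpace ℝ (Fin 2)))
    (hBnorm : ∀ n : ℕ, ‖B n‖ ≤ C / (r * n + 1))
    (F : ℕ → EuclideanSpace ℝ (Fin 2))
    (hF : Summable (fun n => ‖F n‖ * ν ^ n)) :
    let u : ℕ → EuclideanSpace ℝ (Fin 2) := fun n => B n (F n)
    Summable (fun n => ‖u n‖ * ν ^ n) ∧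
    (∑' n, ‖u n‖ * ν ^ n) ≤ C * ∑' n, ‖F n‖ * ν ^ n ∧
    (∀ v : ℝ, |v| < ν → ∃ d : EuclideanSpace ℝ (Fin 2),
      HasDerivAt (fun w : ℝ => ∑' n : ℕ, w ^ n • u n) d v ∧
      (r * v) • d - A (∑' n : ℕ, v ^ n • u n) = ∑' n : ℕ, v ^ n • F n) ∧
    (∀ w : ℕ → EuclideanSpace ℝ (Fin 2), Summable (fun n => ‖w n‖ * ν ^ n) →
      (∀ v : ℝ, |v| < ν → ∃ d : EuclideanSpace ℝ (Fin 2),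
        HasDerivAt (fun s : ℝ => ∑' n : ℕ, s ^ n • w n) d v ∧
        (r * v) • d - A (∑' n : ℕ, v ^ n • w n) = ∑' n : ℕ, v ^ n • F n) →
      w = u) := by
  intro u
  have hBF : ∀ n : ℕ, (r * (n : ℝ)) • u n - A (u n) = F n := by
    intro n
    have h := congrArg (fun T : EuclideanSpace ℝ (Fin 2) →L[ℝ] EuclideanSpace ℝ (Fin 2) =>
      T (F n)) (hB n).1
    simpa [ContinuousLinearMap.sub_apply, ContinuousLinearMap.smul_apply] using h
  have hle : ∀ n : ℕ, ‖u n‖ * ν ^ n ≤ C * (‖F n‖ * ν ^ n) := by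
    intro n
    have hrn : (0:ℝ) ≤ r * n := mul_nonneg hr.le (Nat.cast_nonneg n)
    have h1 : ‖u n‖ ≤ C * ‖F n‖ := by
      calc ‖u n‖ ≤ ‖B n‖ * ‖F n‖ := (B n).le_opNorm _
        _ ≤ (C / (r * n + 1)) * ‖F n‖ := by gcongr; exact hBnorm n
        _ ≤ C * ‖F n‖ := by
            gcongr
            exact div_le_self hC.le (by linarith)
    calc ‖u n‖ * ν ^ n ≤ (C * ‖F n‖) * ν ^ n := by gcongr
      _ = C * (‖F n‖ * ν ^ n) := by ring
  have hu_ns : Summable fun n => ‖u n‖ * ν ^ n :=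
    Summable.of_nonneg_of_le (fun n => by positivity) hle (hF.mul_left C)
  refine ⟨hu_ns, ?_, ?_, ?_⟩
  · calc (∑' n, ‖u n‖ * ν ^ n) ≤ ∑' n, C * (‖F n‖ * ν ^ n) :=
        Summable.tsum_le_tsum hle hu_ns (hF.mul_left C)
      _ = C * ∑' n, ‖F n‖ * ν ^ n := tsum_mul_left
  · intro v hv
    refine ⟨∑' n : ℕ, ((n : ℝ) * v ^ (n - 1)) • u n, aux_hasDerivAt hν u hu_ns hv, ?_⟩
    have hk := key_hasSum hν r A u hu_ns hv
    have hfu : (fun n : ℕ => v ^ n • ((r * (n : ℝ)) • u n - A (u n)))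
        = fun n : ℕ => v ^ n • F n := funext fun n => by rw [hBF n]
    rw [hfu] at hk
    exact hk.tsum_eq.symm
  · intro w hw hsol
    set c : ℕ → EuclideanSpace ℝ (Fin 2) := fun n => w n - u n with hcdef
    have hcs : Summable fun n => ‖c n‖ * ν ^ n := by
      refine Summable.of_nonneg_of_le (fun n => by positivity) (fun n => ?_) (hw.add hu_ns)
      have h := norm_sub_le (w n) (u n)
      have hp : (0:ℝ) ≤ ν ^ n := by positivity
      calc ‖c n‖ * ν ^ n ≤ (‖w n‖ + ‖u n‖) * ν ^ n := by gcongr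
        _ = ‖w n‖ * ν ^ n + ‖u n‖ * ν ^ n := add_mul _ _ _
    have hG0 : ∀ v : ℝ, |v| < ν →
        ∑' n : ℕ, v ^ n • ((r * (n : ℝ)) • c n - A (c n)) = 0 := by
      intro v hv
      obtain ⟨d, hd, heq⟩ := hsol v hv
      have hdw : d = ∑' n : ℕ, ((n : ℝ) * v ^ (n - 1)) • w n :=
        hd.unique (aux_hasDerivAt hν w hw hv)
      rw [hdw] at heq
      have hkw := key_hasSum hν r A w hw hv
      rw [heq] at hkw
      have hku := key_hasSum hν r A u hu_ns hv
      have hfu : (fun n : ℕ => v ^ n • ((r * (n : ℝ)) • u n - A (u n)))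
          = fun n : ℕ => v ^ n • F n := funext fun n => by rw [hBF n]
      have hkuval : (r * v) • (∑' n : ℕ, ((n : ℝ) * v ^ (n - 1)) • u n)
          - A (∑' n : ℕ, v ^ n • u n) = ∑' n : ℕ, v ^ n • F n := by
        rw [hfu] at hku
        exact hku.tsum_eq.symm
      rw [hkuval] at hku
      have hdiff := hkw.sub hku
      rw [sub_self] at hdiff
      have hfd : (fun n : ℕ => v ^ n • ((r * (n : ℝ)) • w n - A (w n))
            - v ^ n • ((r * (n : ℝ)) • u n - A (u n)))
          = fun n : ℕ => v ^ n • ((r * (n : ℝ)) • c n - A (c n)) := by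
        funext n
        rw [← smul_sub]
        congr 1
        simp only [hcdef, smul_sub, map_sub]
        abel
      rw [hfd] at hdiff
      exact hdiff.tsum_eq
    set M := ∑' n : ℕ, ‖c n‖ * ν ^ n with hMdef
    have hMn : ∀ n, ‖c n‖ * ν ^ n ≤ M := fun n => Summable.le_tsum hcs n (fun m _ => by positivity)
    have hM0 : 0 ≤ M := tsum_nonneg (fun n => by positivity)
    have h12 : ‖(1/2 : ℝ)‖ < 1 := by
      rw [Real.norm_eq_abs, abs_of_pos (by norm_num : (0:ℝ) < 1/2)]; norm_num
    have hGs : Summable fun n : ℕ => ‖(r * (n : ℝ)) • c n - A (c n)‖ * (ν / 2) ^ n := by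
      refine Summable.of_nonneg_of_le (fun n => by positivity) (fun n => ?_)
        (((summable_pow_mul_geometric_of_norm_lt_one 1 h12).mul_left (r * M)).add
          ((summable_geometric_of_lt_one (r := (1/2:ℝ)) (by norm_num) (by norm_num)).mul_left
            (‖A‖ * M)))
      have hrn : (0:ℝ) ≤ r * n := mul_nonneg hr.le (Nat.cast_nonneg n)
      have h1 : ‖(r * (n : ℝ)) • c n - A (c n)‖ ≤ r * n * ‖c n‖ + ‖A‖ * ‖c n‖ := by
        calc ‖(r * (n : ℝ)) • c n - A (c n)‖ ≤ ‖(r * (n : ℝ)) • c n‖ + ‖A (c n)‖ :=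
              norm_sub_le _ _
          _ ≤ r * n * ‖c n‖ + ‖A‖ * ‖c n‖ := by
              rw [norm_smul, Real.norm_eq_abs, abs_of_nonneg hrn]
              gcongr
              exact A.le_opNorm _
      have h2 : ‖c n‖ * (ν / 2) ^ n ≤ M * (1/2) ^ n := by
        have hsplit : (ν / 2 : ℝ) ^ n = ν ^ n * (1/2) ^ n := by
          rw [← mul_pow]; ring_nf
        calc ‖c n‖ * (ν / 2) ^ n = (‖c n‖ * ν ^ n) * (1/2) ^ n := by rw [hsplit]; ring
          _ ≤ M * (1/2) ^ n := by gcongr; exact hMn n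
      have hcn0 : (0:ℝ) ≤ ‖c n‖ := norm_nonneg _
      have hhalf : (0:ℝ) ≤ (1/2:ℝ) ^ n := by positivity
      have hνp : (0:ℝ) ≤ (ν/2) ^ n := by positivity
      calc ‖(r * (n : ℝ)) • c n - A (c n)‖ * (ν / 2) ^ n
          ≤ (r * n * ‖c n‖ + ‖A‖ * ‖c n‖) * (ν / 2) ^ n := by gcongr
        _ = r * n * (‖c n‖ * (ν / 2) ^ n) + ‖A‖ * (‖c n‖ * (ν / 2) ^ n) := by ring
        _ ≤ r * n * (M * (1/2) ^ n) + ‖A‖ * (M * (1/2) ^ n) := by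
            gcongr
        _ = r * M * ((n:ℝ) ^ 1 * (1/2) ^ n) + ‖A‖ * M * (1/2) ^ n := by ring
    have hGzero : ∀ n : ℕ, (r * (n : ℝ)) • c n - A (c n) = 0 := by
      refine aux_zero (by linarith : (0:ℝ) < ν / 2) _ hGs (fun v hv => hG0 v (by linarith)) 
    funext n
    have h := congrArg (fun T : EuclideanSpace ℝ (Fin 2) →L[ℝ] EuclideanSpace ℝ (Fin 2) =>
      T (c n)) (hB n).2
    simp only [ContinuousLinearMap.comp_apply, ContinuousLinearMap.sub_apply,
      ContinuousLinearMap.smul_apply, ContinuousLinearMap.id_apply] at h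
    rw [hGzero n, map_zero] at h
    have := h.symm
    rw [hcdef] at this
    simpa [sub_eq_zero] using this
end

section
/- Along the periodic orbit φ_h of the planar layer problem, the derivative of the first Melnikov component with respect to y₂ at (h, 0, 0, 0) equals −2 h^{-1} ∫₀^{T₀(h)} e^{∫_t^{T₀(h)} 2 z_{2h}(s) ds} z_{2h}(t)² dt, which is strictly negative for h > 0. More precisely: ∫₀^{T₀} ψ_h(t) · [[0,0],[0,2]] φ_h(t) dt = −2 h^{-1} ∫₀^{T₀} e^{∫_t^{T₀} 2 z_{2h}(s) ds} z_{2h}(t)² dt. -/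
/-- Along the periodic orbit `φ_h = (x_{2h}, z_{2h})` of the planar layer problem, the
`y₂`-derivative of the first Melnikov component at `(h,0,0,0)` equals
`∫₀^{T₀} ψ_h(t) · [[0,0],[0,2]] φ_h(t) dt = -2 h⁻¹ ∫₀^{T₀} e^{∫_t^{T₀} 2 z_{2h}} z_{2h}(t)² dt`,
and this quantity is strictly negative for `h > 0`. -/
theorem stmt_16 (h T : ℝ) (hh : 0 < h) (hT : 0 < T) (x z : ℝ → ℝ)
    (hx0 : x 0 = -h) (hz0 : z 0 = 0)
    (hx : ∀ t, HasDerivAt x (-(z t)) t)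
    (hz : ∀ t, HasDerivAt z (x t + (z t) ^ 2) t)
    (hper : ∀ t, x (t + T) = x t ∧ z (t + T) = z t) :
    let ψ₂ : ℝ → ℝ :=
      fun t => -h⁻¹ * Real.exp (∫ s in t..T, 2 * z s) * (z t)
    (∫ t in (0 : ℝ)..T, ψ₂ t * (2 * z t))
        = -2 * h⁻¹ * ∫ t in (0 : ℝ)..T, Real.exp (∫ s in t..T, 2 * z s) * (z t) ^ 2 ∧
    (∫ t in (0 : ℝ)..T, ψ₂ t * (2 * z t)) < 0 := by
  intro ψ₂
  have hzc : Continuous z := by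
    refine continuous_iff_continuousAt.2 fun t => (hz t).continuousAt
  -- continuity of the exponential weight
  have hint : ∀ a b : ℝ, IntervalIntegrable (fun s => 2 * z s) MeasureTheory.volume a b :=
    fun a b => (continuous_const.mul hzc).intervalIntegrable a b
  have hgc : Continuous fun t => ∫ s in t..T, 2 * z s := by
    have : (fun t => ∫ s in t..T, 2 * z s)
        = fun t => (∫ s in (0:ℝ)..T, 2 * z s) - ∫ s in (0:ℝ)..t, 2 * z s := by
      funext t
      rw [eq_sub_iff_add_eq, add_comm, intervalIntegral.integral_add_adjacent_intervals
        (hint 0 t) (hint t T)]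
    rw [this]
    exact continuous_const.sub (intervalIntegral.continuous_primitive hint 0)
  have hFc : Continuous fun t => Real.exp (∫ s in t..T, 2 * z s) * (z t) ^ 2 :=
    (hgc.rexp).mul (hzc.pow 2)
  have hFnn : ∀ t, 0 ≤ Real.exp (∫ s in t..T, 2 * z s) * (z t) ^ 2 :=
    fun t => mul_nonneg (Real.exp_pos _).le (sq_nonneg _)
  -- first equality
  have heq : (∫ t in (0 : ℝ)..T, ψ₂ t * (2 * z t))
      = -2 * h⁻¹ * ∫ t in (0 : ℝ)..T, Real.exp (∫ s in t..T, 2 * z s) * (z t) ^ 2 := by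
    rw [← intervalIntegral.integral_const_mul]
    apply intervalIntegral.integral_congr
    intro t _
    simp only [ψ₂]
    ring
  refine ⟨heq, ?_⟩
  rw [heq]
  -- find δ where z is negative
  have hz0' : HasDerivAt z (-h) 0 := by
    have := hz 0; rwa [hx0, hz0, zero_pow (by norm_num), add_zero] at this
  have hneg : ∀ᶠ t in nhdsWithin 0 (Set.Ioi 0), z t < 0 := by
    have hlim := hz0'.hasDerivWithinAt (s := Set.Ioi (0:ℝ))
    have := (hasDerivWithinAt_iff_tendsto_slope.1 hlim)
    have hmem : Set.Iio (0:ℝ) ∈ nhds (-h) := Iio_mem_nhds (by linarith)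
    have hslope := this.eventually_mem hmem
    have hslope' : ∀ᶠ t in nhdsWithin 0 (Set.Ioi 0), slope z 0 t < 0 := by
      have : nhdsWithin (0:ℝ) (Set.Ioi 0) ≤ nhdsWithin 0 (Set.Ioi 0 \ {0}) := by
        apply nhdsWithin_mono
        intro t ht
        exact ⟨ht, ne_of_gt ht⟩
      exact (this hslope)
    filter_upwards [hslope', self_mem_nhdsWithin] with t ht ht0
    have : slope z 0 t = z t / t := by
      simp [slope, hz0, vsub_eq_sub, div_eq_inv_mul]
    rw [this] at ht
    have := mul_neg_of_neg_of_pos ht (show (0:ℝ) < t from ht0)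
    rwa [div_mul_cancel₀] at this
    exact ne_of_gt ht0
  obtain ⟨δ, hδ, hδneg⟩ : ∃ δ > 0, ∀ t ∈ Set.Ioo 0 δ, z t < 0 := by
    rcases mem_nhdsGT_iff_exists_Ioo_subset.1 hneg with ⟨u, hu, hsub⟩
    exact ⟨u, hu, fun t ht => hsub ht⟩
  set δ' := min δ T with hδ'def
  have hδ'0 : 0 < δ' := lt_min hδ hT
  have hδ'T : δ' ≤ T := min_le_right _ _
  have hsplit : (∫ t in (0:ℝ)..T, Real.exp (∫ s in t..T, 2 * z s) * (z t) ^ 2)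
      = (∫ t in (0:ℝ)..δ', Real.exp (∫ s in t..T, 2 * z s) * (z t) ^ 2)
        + ∫ t in δ'..T, Real.exp (∫ s in t..T, 2 * z s) * (z t) ^ 2 := by
    rw [intervalIntegral.integral_add_adjacent_intervals (hFc.intervalIntegrable _ _)
      (hFc.intervalIntegrable _ _)]
  have h1 : 0 < ∫ t in (0:ℝ)..δ', Real.exp (∫ s in t..T, 2 * z s) * (z t) ^ 2 := by
    apply intervalIntegral.intervalIntegral_pos_of_pos_on (hFc.intervalIntegrable _ _)
    · intro t ht
      have hzt : z t < 0 := hδneg t ⟨ht.1, lt_of_lt_of_le ht.2 (min_le_left _ _)⟩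
      have : 0 < (z t) ^ 2 := by nlinarith
      exact mul_pos (Real.exp_pos _) this
    · exact hδ'0
  have h2 : 0 ≤ ∫ t in δ'..T, Real.exp (∫ s in t..T, 2 * z s) * (z t) ^ 2 :=
    intervalIntegral.integral_nonneg hδ'T fun t _ => hFnn t
  have hpos : 0 < ∫ t in (0:ℝ)..T, Real.exp (∫ s in t..T, 2 * z s) * (z t) ^ 2 := by
    rw [hsplit]; linarith
  have : (0:ℝ) < 2 * h⁻¹ := by positivity
  nlinarith
end
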